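/- arXiv:1607.04025 — 5 statements merged into one kernel-verified Lean document; each statement's English description precedes it below -/
import Mathlib

section
/- Every synchronizing deterministic finite automaton with n states has a reset word of length at most (n³ - n)/6. -/
/-- Action of a word on a state. -/
def actW {Q A : Type*} (δ : Q → A → Q) (q : Q) (w : List A) : Q := w.foldl δ q

/-- Image of the full state set under a word. -/
def img {Q A : Type*} [Fintype Q] [DecidableEq Q] (δ : Q → A → Q) (w : List A) : Finset Q :=
  Finset.univ.image (fun q => actW δ q w)

/-!
Let `w` be a shortest word with `|S·w| < |S|`; it merges two states `p ≠ q` of `S`. For each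
prefix length `t < |w|` put `S_t = S·(w.take t)` and let `p_t, q_t` be the images of `p, q`.
Minimality of `w` gives `|S_t| = |S|`, `p_t ≠ q_t`, and `{p_t, q_t} ⊄ S_s` for `s < t`, since
otherwise `w.take s ++ w.drop t` would be a shorter compressing word. Hence the pairs
`{p_t, q_t}` and the complements `S_tᶜ` form a skew Bollobás system, and Frankl's theorem gives
`|w| ≤ C(n - |S| + 2, 2)`. Frankl's theorem comes from exterior algebra: the wedges of
moment-curve vectors indexed by `A_t` pair triangularly with the functionals built from
polynomials vanishing on `B_s`, so they are independent in `⋀^a K^(a+b)`. Compressing `Q` one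
state at a time costs at most `∑_{k=2}^{n} C(n - k + 2, 2) = C(n + 1, 3) = (n³ - n)/6`.
-/

open Finset Polynomial exteriorPower

theorem linearIndependent_of_triangular {ι K V : Type*} [Fintype ι] [LinearOrder ι]
    [CommRing K] [IsDomain K] [AddCommGroup V] [Module K V] (w : ι → V)
    (f : ι → Module.Dual K V) (h_lt : ∀ s t, s < t → f s (w t) = 0)
    (h_diag : ∀ t, f t (w t) ≠ 0) :
    LinearIndependent K w := by
  let N : Matrix ι ι K := .of fun t s => f s (w t)
  have hN_tri : N.IsUpperTriangular := fun t s hst => h_lt s t hst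
  have hN : N.det ≠ 0 := by
    rw [Matrix.det_of_isUpperTriangular hN_tri]
    exact prod_ne_zero_iff.mpr fun t _ => h_diag t
  exact .of_comp (LinearMap.pi f) (Matrix.linearIndependent_rows_of_det_ne_zero hN)

section MomentCurve

variable {K : Type*} [Field K]

def momentVec (d : ℕ) (x : K) : Fin d → K := fun k => x ^ (k : ℕ)

def coeffDual (d : ℕ) (P : K[X]) : Module.Dual K (Fin d → K) :=
  Fintype.linearCombination K fun k => P.coeff k

lemma coeffDual_momentVec {d : ℕ} {P : K[X]} (hP : P.natDegree < d) (x : K) :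
    coeffDual d P (momentVec d x) = P.eval x := by
  rw [eval_eq_sum_range' hP, coeffDual, Fintype.linearCombination_apply,
    ← Fin.sum_univ_eq_sum_range (fun k => P.coeff k * x ^ k)]
  simp only [momentVec, smul_eq_mul, mul_comm]

variable {Q : Type*} (a b : ℕ) (r : Q → K)

noncomputable def momentWedge (u : Fin a → Q) : ⋀[K]^a (Fin (a + b) → K) :=
  ιMulti K a fun i => momentVec (a + b) (r (u i))

noncomputable def vanishingDual (B : Finset Q) : Module.Dual K (⋀[K]^a (Fin (a + b) → K)) :=
  alternatingMapToDual K _ a fun j => coeffDual (a + b) (X ^ (j : ℕ) * ∏ y ∈ B, (X - C (r y)))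

variable {a b}

lemma vanishingDual_momentWedge {B : Finset Q} (hB : B.card = b) (u : Fin a → Q) :
    vanishingDual a b r B (momentWedge a b r u) =
      (∏ i, ∏ y ∈ B, (r (u i) - r y)) * (Matrix.vandermonde (r ∘ u)).det := by
  have hdeg : ∀ j : Fin a, (X ^ (j : ℕ) * ∏ y ∈ B, (X - C (r y))).natDegree < a + b := by
    intro j
    rw [natDegree_mul (pow_ne_zero _ X_ne_zero) (prod_ne_zero_iff.mpr fun y _ => X_sub_C_ne_zero _),
      natDegree_X_pow, natDegree_finsetProd_X_sub_C_eq_card, hB]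
    omega
  rw [vanishingDual, momentWedge, alternatingMapToDual_apply_ιMulti, ← Matrix.det_mul_column]
  congr 1
  ext i j
  simp [coeffDual_momentVec (hdeg j), eval_prod, Matrix.vandermonde_apply, mul_comm]

end MomentCurve

theorem card_le_choose_of_skew_of_injective {Q ι K : Type*} [Fintype ι] [LinearOrder ι] [Field K]
    {r : Q → K} (hr : Function.Injective r) {a b : ℕ} (A B : ι → Finset Q)
    (hA : ∀ t, (A t).card = a) (hB : ∀ t, (B t).card = b) (h_disj : ∀ t, Disjoint (A t) (B t))
    (h_skew : ∀ s t, s < t → ¬Disjoint (A t) (B s)) :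
    Fintype.card ι ≤ (a + b).choose a := by
  let e t : Fin a ≃ A t := (equivFinOfCardEq (hA t)).symm
  have hli : LinearIndependent K fun t => momentWedge a b r fun i => (e t i : Q) := by
    refine linearIndependent_of_triangular _ (fun s => vanishingDual a b r (B s)) ?_ ?_
    · intro s t hst
      obtain ⟨x, hxA, hxB⟩ := not_disjoint_iff.mp (h_skew s t hst)
      rw [vanishingDual_momentWedge r (hB s)]
      refine mul_eq_zero_of_left (prod_eq_zero (mem_univ ((e t).symm ⟨x, hxA⟩)) ?_) _
      exact prod_eq_zero hxB (by simp)
    · intro t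
      rw [vanishingDual_momentWedge r (hB t)]
      refine mul_ne_zero (prod_ne_zero_iff.mpr fun i _ => prod_ne_zero_iff.mpr fun y hy => ?_) ?_
      · have hi : (e t i : Q) ∉ B t := disjoint_left.mp (h_disj t) (e t i).2
        exact sub_ne_zero.mpr (hr.ne (ne_of_mem_of_not_mem hy hi).symm)
      · exact Matrix.det_vandermonde_ne_zero_iff.mpr
          (hr.comp (Subtype.val_injective.comp (e t).injective))
  calc Fintype.card ι ≤ Module.finrank K (⋀[K]^a (Fin (a + b) → K)) :=
        hli.fintype_card_le_finrank
    _ = (a + b).choose a := by rw [exteriorPower.finrank_eq, Module.finrank_fin_fun]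

theorem card_le_choose_of_skew {Q ι : Type*} [Fintype ι] [LinearOrder ι] {a b : ℕ}
    (A B : ι → Finset Q) (hA : ∀ t, (A t).card = a) (hB : ∀ t, (B t).card = b)
    (h_disj : ∀ t, Disjoint (A t) (B t)) (h_skew : ∀ s t, s < t → ¬Disjoint (A t) (B s)) :
    Fintype.card ι ≤ (a + b).choose a :=
  -- one independent transcendental per point embeds an arbitrary `Q` into a field
  card_le_choose_of_skew_of_injective (K := FractionRing (MvPolynomial Q ℚ))
    (r := fun x => algebraMap _ _ (MvPolynomial.X x : MvPolynomial Q ℚ))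
    ((IsFractionRing.injective _ _).comp MvPolynomial.X_injective) A B hA hB h_disj h_skew

section Automaton

variable {Q A : Type*} (δ : Q → A → Q)

lemma actW_append (q : Q) (u v : List A) : actW δ q (u ++ v) = actW δ (actW δ q u) v :=
  List.foldl_append

lemma actW_take_drop (q : Q) (w : List A) (t : ℕ) :
    actW δ (actW δ q (w.take t)) (w.drop t) = actW δ q w := by
  rw [← actW_append, List.take_append_drop]

variable [DecidableEq Q]

def imgOn (S : Finset Q) (w : List A) : Finset Q :=
  S.image fun q => actW δ q w

lemma imgOn_nil (S : Finset Q) : imgOn δ S [] = S := by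
  simp [imgOn, actW]

lemma imgOn_append (S : Finset Q) (u v : List A) :
    imgOn δ S (u ++ v) = imgOn δ (imgOn δ S u) v := by
  simp only [imgOn, image_image]
  exact image_congr fun q _ => actW_append δ q u v

lemma card_imgOn_le (S : Finset Q) (w : List A) : (imgOn δ S w).card ≤ S.card :=
  card_image_le

lemma card_imgOn_lt_iff {S : Finset Q} {w : List A} :
    (imgOn δ S w).card < S.card ↔
      ∃ p ∈ S, ∃ q ∈ S, p ≠ q ∧ actW δ p w = actW δ q w := by
  rw [(card_imgOn_le δ S w).lt_iff_ne, Ne, imgOn, card_image_iff, Set.InjOn]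
  simp only [mem_coe, not_forall]
  grind

theorem exists_compressing_word_length_le [Fintype Q] {S : Finset Q}
    (h : ∃ w, (imgOn δ S w).card < S.card) :
    ∃ w, (imgOn δ S w).card < S.card ∧
      w.length ≤ (2 + (Fintype.card Q - S.card)).choose 2 := by
  obtain ⟨w, hw, hmin⟩ := (measure (List.length (α := A))).wf.has_min _ h
  refine ⟨w, hw, ?_⟩
  have h_short : ∀ u : List A, u.length < w.length → (imgOn δ S u).card = S.card :=
    fun u hu => (card_imgOn_le δ S u).antisymm (not_lt.mp fun hlt => hmin u hlt hu)
  obtain ⟨p, hp, q, hq, hpq, hpqw⟩ := (card_imgOn_lt_iff δ).mp hw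
  let M (t : Fin w.length) := imgOn δ S (w.take t)
  let pt (t : Fin w.length) := actW δ p (w.take t)
  let qt (t : Fin w.length) := actW δ q (w.take t)
  have h_ne (t : Fin w.length) : pt t ≠ qt t := fun h =>
    ((card_imgOn_lt_iff δ).mpr ⟨p, hp, q, hq, hpq, h⟩).ne (h_short _ (by simp))
  have h_mem (t : Fin w.length) : {pt t, qt t} ⊆ M t := by
    rw [insert_subset_iff, singleton_subset_iff]
    exact ⟨mem_image_of_mem _ hp, mem_image_of_mem _ hq⟩
  have h_skew (s t : Fin w.length) (hst : s < t) : ¬{pt t, qt t} ⊆ M s := by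
    rw [insert_subset_iff, singleton_subset_iff]
    rintro ⟨hps, hqs⟩
    have hlen : (w.take s ++ w.drop t).length < w.length := by
      simp only [List.length_append, List.length_take, List.length_drop]
      omega
    refine (h_short _ hlen).not_lt ?_
    rw [imgOn_append]
    refine ((card_imgOn_lt_iff δ).mpr ⟨pt t, hps, qt t, hqs, h_ne t, ?_⟩).trans_le
      (card_imgOn_le δ S _)
    simp only [pt, qt, actW_take_drop, hpqw]
  simpa using card_le_choose_of_skew (fun t => {pt t, qt t}) (fun t => (M t)ᶜ)
    (fun t => card_pair (h_ne t))
    (fun t => by rw [card_compl, h_short _ (by simp)])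
    (fun t => disjoint_compl_right_iff.mpr (h_mem t))
    (fun s t hst => disjoint_compl_right_iff.not.mpr (h_skew s t hst))

lemma exists_compressing_word_of_synchronizing [Fintype Q] (hsync : ∃ w, (img δ w).card = 1)
    {S : Finset Q} (hS : 1 < S.card) : ∃ w, (imgOn δ S w).card < S.card := by
  obtain ⟨w, hw⟩ := hsync
  exact ⟨w, ((card_le_card (image_subset_image (subset_univ S))).trans_eq hw).trans_lt hS⟩

-- stated additively to avoid truncated subtraction
theorem exists_word_card_imgOn_eq_one [Fintype Q]
    (hcomp : ∀ S : Finset Q, 1 < S.card → ∃ w, (imgOn δ S w).card < S.card)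
    {S : Finset Q} (hS : S.Nonempty) :
    ∃ w, (imgOn δ S w).card = 1 ∧
      w.length + (Fintype.card Q + 2 - S.card).choose 3 ≤ (Fintype.card Q + 1).choose 3 := by
  induction hk : S.card using Nat.strong_induction_on generalizing S with
  | _ k ih =>
  subst hk
  rcases (Nat.one_le_iff_ne_zero.mpr hS.card_pos.ne').eq_or_lt with h1 | h2
  · exact ⟨[], by rw [imgOn_nil, ← h1], by simp [← h1]⟩
  obtain ⟨w₁, hw₁, hlen₁⟩ := exists_compressing_word_length_le δ (hcomp S h2)
  obtain ⟨w₂, hw₂, hlen₂⟩ := ih _ hw₁ (hS.image _ : (imgOn δ S w₁).Nonempty) rfl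
  refine ⟨w₁ ++ w₂, by rwa [imgOn_append], ?_⟩
  set n := Fintype.card Q
  have hSn : S.card ≤ n := card_le_univ S
  have h_pascal : (2 + (n - S.card)).choose 2 + (n + 2 - S.card).choose 3 =
      (n + 3 - S.card).choose 3 := by
    rw [show n + 3 - S.card = (2 + (n - S.card)) + 1 by omega, Nat.choose_succ_succ',
      show n + 2 - S.card = 2 + (n - S.card) by omega]
  have h_mono : (n + 3 - S.card).choose 3 ≤ (n + 2 - (imgOn δ S w₁).card).choose 3 :=
    Nat.choose_le_choose _ (by omega)
  rw [List.length_append]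
  omega

end Automaton

theorem succ_choose_three (n : ℕ) : (n + 1).choose 3 = (n ^ 3 - n) / 6 := by
  have h_desc : (n + 1).descFactorial 3 = 6 * (n + 1).choose 3 :=
    Nat.descFactorial_eq_factorial_mul_choose _ _
  have h_cube : (n + 1).descFactorial 3 + n = n ^ 3 := by
    rcases n with _ | n
    · rfl
    · simp only [Nat.descFactorial_succ, Nat.descFactorial_zero]
      rw [show n + 1 + 1 - 2 = n by omega, show n + 1 + 1 - 1 = n + 1 by omega, Nat.sub_zero]
      ring
  omega

/-- Pin's cubic bound: every synchronizing DFA with n states has a reset word of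
length at most (n^3 - n)/6. -/
theorem pin_cubic_bound {Q A : Type*} [Fintype Q] [DecidableEq Q] (δ : Q → A → Q)
    (hsync : ∃ w : List A, (img δ w).card = 1) :
    ∃ w : List A, (img δ w).card = 1 ∧
      w.length ≤ (Fintype.card Q ^ 3 - Fintype.card Q) / 6 := by
  obtain ⟨w₀, hw₀⟩ := hsync
  obtain ⟨q, -⟩ := card_pos.mp (hw₀.symm ▸ one_pos : 0 < (img δ w₀).card)
  obtain ⟨w, hw, hlen⟩ := exists_word_card_imgOn_eq_one δ
    (fun _ => exists_compressing_word_of_synchronizing δ ⟨w₀, hw₀⟩) ⟨q, mem_univ q⟩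
  refine ⟨w, hw, ?_⟩
  rw [card_univ, Nat.add_sub_cancel_left, Nat.choose_eq_zero_of_lt (by norm_num), add_zero,
    succ_choose_three] at hlen
  exact hlen
end

section
/- The maximal length of an m-subset Frankl–Pin sequence in a set Q with |Q| = n is at most C(n - m + 2, 2). -/
/-!
Embed `Q` into a field and let `P j = ∏_{q ∉ M j} (X - q)`, of degree `n - m`. The vectors
`P j ∧ X P j` of `⋀² K[X]_(n-m+2)` are linearly independent: the functional
`a ∧ b ↦ a(x i) b(y i) - a(y i) b(x i)` takes the value `(y i - x i) P j(x i) P j(y i)` on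
`P j ∧ X P j`, which vanishes for `j < i` (one of `x i`, `y i` lies outside `M j`) and not for
`j = i`. Hence `ℓ ≤ dim ⋀² K[X]_(n-m+2)`.
-/

open Polynomial Finset

theorem LinearIndependent.of_isUpperTriangular_dual {K V ι : Type*} [Field K] [AddCommGroup V]
    [Module K V] [Fintype ι] [LinearOrder ι] {v : ι → V} (f : ι → Module.Dual K V)
    (hlt : ∀ i j, j < i → f i (v j) = 0) (hdiag : ∀ i, f i (v i) ≠ 0) :
    LinearIndependent K v := by
  classical
  let A : Matrix ι ι K := .of fun i j => f i (v j)
  have hdet : A.det ≠ 0 := by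
    rw [Matrix.det_of_isUpperTriangular (M := A) fun i j => hlt i j]
    exact prod_ne_zero_iff.2 fun i _ => hdiag i
  exact (Matrix.linearIndependent_cols_of_det_ne_zero hdet).of_comp (LinearMap.pi f)

section

variable {K : Type*} [Field K]

theorem Polynomial.eval_prod_X_sub_C_eq_zero_iff (s : Finset K) (z : K) :
    (∏ c ∈ s, (X - C c)).eval z = 0 ↔ z ∈ s := by
  simp [eval_prod, prod_eq_zero_iff, sub_eq_zero]

theorem Polynomial.finrank_degreeLT (d : ℕ) : Module.finrank K K[X]_d = d := by
  rw [Module.finrank_eq_card_basis (degreeLT.basis K d), Fintype.card_fin]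

theorem Polynomial.mem_degreeLT_of_natDegree_lt {p : K[X]} {d : ℕ} (h : p.natDegree < d) :
    p ∈ K[X]_d :=
  mem_degreeLT.2 (degree_le_natDegree.trans_lt (by exact_mod_cast h))

noncomputable def evalWedge {d : ℕ} (u v : K) : Module.Dual K (⋀[K]^2 K[X]_d) :=
  exteriorPower.alternatingMapToDual K _ 2
    ![(leval u).comp (K[X]_d).subtype, (leval v).comp (K[X]_d).subtype]

theorem evalWedge_ιMulti {d : ℕ} (u v : K) (a b : K[X]_d) :
    evalWedge u v (exteriorPower.ιMulti K 2 ![a, b]) =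
      (a : K[X]).eval u * (b : K[X]).eval v - (a : K[X]).eval v * (b : K[X]).eval u := by
  simp [evalWedge, Matrix.det_fin_two]

/-- The sets `S i` play the role of the complements of the `M i`. -/
theorem franklPin_length_le_choose {ℓ k : ℕ} (S : Fin ℓ → Finset K) (x y : Fin ℓ → K)
    (hS : ∀ i, #(S i) ≤ k) (hx : ∀ i, x i ∉ S i) (hy : ∀ i, y i ∉ S i) (hne : ∀ i, x i ≠ y i)
    (hcov : ∀ i j, j < i → x i ∈ S j ∨ y i ∈ S j) :
    ℓ ≤ (k + 2).choose 2 := by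
  set P : Fin ℓ → K[X] := fun j => ∏ c ∈ S j, (X - C c)
  have hP : ∀ j, (P j).natDegree ≤ k := fun j =>
    (natDegree_finsetProd_X_sub_C_eq_card _ _).trans_le (hS j)
  let a j : K[X]_(k + 2) := ⟨P j, mem_degreeLT_of_natDegree_lt (by linarith [hP j])⟩
  let b j : K[X]_(k + 2) := ⟨X * P j, mem_degreeLT_of_natDegree_lt
    (natDegree_mul_le.trans_lt (by linarith [hP j, natDegree_X_le (R := K)]))⟩
  have hwedge : ∀ i j, evalWedge (x i) (y i) (exteriorPower.ιMulti K 2 ![a j, b j]) =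
      (y i - x i) * ((P j).eval (x i) * (P j).eval (y i)) := by
    intro i j
    simp only [evalWedge_ιMulti, a, b, eval_mul, eval_X]
    ring
  have hli : LinearIndependent K fun j => exteriorPower.ιMulti K 2 ![a j, b j] := by
    refine .of_isUpperTriangular_dual (fun i => evalWedge (x i) (y i))
      (fun i j hji => ?_) fun i => ?_
    · rw [hwedge, mul_eq_zero, mul_eq_zero, eval_prod_X_sub_C_eq_zero_iff,
        eval_prod_X_sub_C_eq_zero_iff]
      exact .inr (hcov i j hji)
    · rw [hwedge]
      exact mul_ne_zero (sub_ne_zero.2 (hne i).symm) <| mul_ne_zero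
        (mt (eval_prod_X_sub_C_eq_zero_iff _ _).1 (hx i))
        (mt (eval_prod_X_sub_C_eq_zero_iff _ _).1 (hy i))
  simpa [exteriorPower.finrank_eq, finrank_degreeLT] using hli.fintype_card_le_finrank

end

theorem franklPin_seq_length_general {Q : Type*} [Fintype Q] [DecidableEq Q]
    (n m ℓ : ℕ) (hn : Fintype.card Q = n)
    (M : Fin ℓ → Finset Q) (x y : Fin ℓ → Q)
    (hcard : ∀ i, (M i).card = m)
    (hmem : ∀ i, x i ∈ M i ∧ y i ∈ M i)
    (hne : ∀ i, x i ≠ y i)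
    (hfp : ∀ i j, j < i → x i ∉ M j ∨ y i ∉ M j) :
    ℓ ≤ Nat.choose (n - m + 2) 2 := by
  let t : Q ↪ ℚ := ⟨fun q => (Fintype.equivFin Q q : ℕ),
    (Nat.cast_injective.comp Fin.val_injective).comp (Fintype.equivFin Q).injective⟩
  refine franklPin_length_le_choose (fun i => (M i)ᶜ.map t) (t ∘ x) (t ∘ y) (fun i => ?_)
    (fun i => ?_) (fun i => ?_) (fun i => ?_) fun i j hji => ?_
  · rw [card_map, card_compl, hcard, hn]
  · simpa using (hmem i).1
  · simpa using (hmem i).2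
  · exact t.injective.ne (hne i)
  · simpa using hfp i j hji

/-- The Frankl–Pin bound: an m-subset Frankl–Pin sequence in an n-set has
length at most C(n-m+2, 2). -/
theorem franklPin_seq_length {Q : Type*} [Fintype Q] [DecidableEq Q]
    (n m ℓ : ℕ) (hn : Fintype.card Q = n) (hm2 : 2 ≤ m) (hmn : m ≤ n)
    (M : Fin ℓ → Finset Q) (x y : Fin ℓ → Q)
    (hcard : ∀ i, (M i).card = m)
    (hmem : ∀ i, x i ∈ M i ∧ y i ∈ M i)
    (hne : ∀ i, x i ≠ y i)
    (hfp : ∀ i j, j < i → x i ∉ M j ∨ y i ∉ M j) :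
    ℓ ≤ Nat.choose (n - m + 2) 2 :=
  franklPin_seq_length_general n m ℓ hn M x y hcard hmem hne hfp
end

section
/- The automaton A_n (as defined) is aperiodic: no word over {a,b,c} induces a transformation of the state set containing a cycle of length at least 2. -/
def apAut (n : ℕ) : Fin (n + 2) → Fin 3 → Fin (n + 2) := fun q x =>
  if x = 0 then (if h : (q : ℕ) < n then ⟨(q : ℕ) + 1, by omega⟩ else q)
  else if x = 1 then
    (if h : 1 ≤ (q : ℕ) ∧ (q : ℕ) ≤ n then ⟨(q : ℕ) - 1, by omega⟩ else q)
  else (if (q : ℕ) = (n + 2) / 2 - 1 then ⟨n + 1, by omega⟩ else q)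

/-!
Order the states `v₁ < ⋯ < vₙ`. Every letter, hence every word, fixes the sink `vₙ` and preserves
`≤` except where it jumps to `vₙ`. Such a map `t` has only trivial cycles: a cycle through `vₙ` is
`{vₙ}`, and along a cycle avoiding `vₙ` the orbit of `x` is monotone if `x ≤ t x` and antitone if
`t x ≤ x`, so returning to `x` forces `t x = x`. On a finite set the iterates of `t` eventually
land in its periodic points, hence in its fixed points.
-/

namespace Function

theorem exists_iterate_eq_iterate_succ_of_periodicPts_subset {α : Type*} [Finite α] {f : α → α}
    (h : periodicPts f ⊆ fixedPoints f) : ∃ k : ℕ, 1 ≤ k ∧ f^[k] = f^[k + 1] := by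
  obtain ⟨i, j, hij, heq⟩ := Set.finite_univ.exists_lt_map_eq_of_forall_mem
    (f := fun n : ℕ => f^[n]) fun _ => Set.mem_univ _
  refine ⟨j, by omega, funext fun x => ?_⟩
  have hper : IsPeriodicPt f (j - i) (f^[i] x) := by
    rw [IsPeriodicPt, IsFixedPt, ← iterate_add_apply, Nat.sub_add_cancel hij.le, heq]
  have hfix : IsFixedPt f (f^[j] x) := heq ▸ h (mk_mem_periodicPts (by omega) hper)
  rw [iterate_succ_apply']
  exact hfix.symm

end Function

open Function

structure MonotoneUpToTop {α : Type*} [Preorder α] [OrderTop α] (t : α → α) : Prop where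
  map_top : t ⊤ = ⊤
  le_or_eq_top {x y : α} : x ≤ y → t x ≤ t y ∨ t x = ⊤

namespace MonotoneUpToTop

section Preorder

variable {α : Type*} [Preorder α] [OrderTop α] {t s : α → α}

protected theorem id : MonotoneUpToTop (id : α → α) :=
  ⟨rfl, fun h => Or.inl h⟩

theorem comp (hs : MonotoneUpToTop s) (ht : MonotoneUpToTop t) : MonotoneUpToTop (s ∘ t) where
  map_top := by rw [comp_apply, ht.map_top, hs.map_top]
  le_or_eq_top {x y} hxy := by
    rcases ht.le_or_eq_top hxy with h | h
    · exact hs.le_or_eq_top h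
    · exact Or.inr (by rw [comp_apply, h, hs.map_top])

theorem iterate_ne_top (ht : MonotoneUpToTop t) {x : α} {p : ℕ} (hx : IsPeriodicPt t p x)
    (hp : 0 < p) (hxt : x ≠ ⊤) (i : ℕ) : t^[i] x ≠ ⊤ := by
  intro hi
  apply hxt
  calc x = t^[p * i] x := (hx.mul_const i).eq.symm
    _ = t^[p * i - i] (t^[i] x) := by
      rw [← iterate_add_apply, Nat.sub_add_cancel (Nat.le_mul_of_pos_left i hp)]
    _ = ⊤ := by rw [hi, iterate_fixed ht.map_top]

theorem iterate_le_iterate_of_le (ht : MonotoneUpToTop t) {x y : α} (hxy : x ≤ y)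
    (hx : ∀ i, t^[i] x ≠ ⊤) (i : ℕ) : t^[i] x ≤ t^[i] y := by
  induction i with
  | zero => exact hxy
  | succ i ih =>
    have hne := hx (i + 1)
    simp only [iterate_succ_apply'] at hne ⊢
    exact (ht.le_or_eq_top ih).resolve_right hne

end Preorder

variable {α : Type*} [LinearOrder α] [OrderTop α] {t : α → α}

theorem isFixedPt_of_isPeriodicPt (ht : MonotoneUpToTop t) {x : α} {p : ℕ}
    (hx : IsPeriodicPt t p x) (hp : 0 < p) : IsFixedPt t x := by
  rcases eq_or_ne x ⊤ with rfl | hxt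
  · exact ht.map_top
  have hne := ht.iterate_ne_top hx hp hxt
  rcases le_total x (t x) with h | h
  · have hmono : Monotone (t^[·] x) := monotone_nat_of_le_succ fun i => by
      simpa only [iterate_succ_apply] using ht.iterate_le_iterate_of_le h hne i
    exact le_antisymm (by simpa only [iterate_one, hx.eq] using hmono hp) h
  · have hne' : ∀ i, t^[i] (t x) ≠ ⊤ := fun i => by
      simpa only [iterate_succ_apply] using hne (i + 1)
    have hanti : Antitone (t^[·] x) := antitone_nat_of_succ_le fun i => by
      simpa only [iterate_succ_apply] using ht.iterate_le_iterate_of_le h hne' i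
    exact le_antisymm h (by simpa only [iterate_one, hx.eq] using hanti hp)

theorem periodicPts_subset_fixedPoints (ht : MonotoneUpToTop t) :
    periodicPts t ⊆ fixedPoints t :=
  fun _ ⟨_, hp, hx⟩ => ht.isFixedPt_of_isPeriodicPt hx hp

end MonotoneUpToTop

theorem monotoneUpToTop_actW {Q A : Type*} [Preorder Q] [OrderTop Q] {δ : Q → A → Q}
    (h : ∀ a, MonotoneUpToTop (δ · a)) (w : List A) : MonotoneUpToTop (actW δ · w) := by
  induction w with
  | nil => exact MonotoneUpToTop.id
  | cons a w ih => exact ih.comp (h a)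

theorem apAut_monotoneUpToTop (n : ℕ) (a : Fin 3) : MonotoneUpToTop (apAut n · a) where
  map_top := by fin_cases a <;> simp [apAut, Fin.top_eq_last, Fin.ext_iff]
  le_or_eq_top {q q'} hqq' := by
    simp only [apAut, Fin.top_eq_last]
    split_ifs <;> simp only [Fin.le_def, Fin.ext_iff, Fin.val_last, or_true] at * <;> omega

/-- $\mathcal{A}_n$ is aperiodic: for every word w the induced transformation
t_w satisfies t_w^k = t_w^{k+1} for some k ≥ 1. -/
theorem apAut_aperiodic (n : ℕ) (w : List (Fin 3)) :
    ∃ k : ℕ, 1 ≤ k ∧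
      (fun q => actW (apAut n) q w)^[k] = (fun q => actW (apAut n) q w)^[k + 1] :=
  exists_iterate_eq_iterate_succ_of_periodicPts_subset
    (monotoneUpToTop_actW (apAut_monotoneUpToTop n) w).periodicPts_subset_fixedPoints
end

section
/- The Kari automaton K with 6 states has a word of rank 2 = 6 − 4, but no word of rank at most 2 has length at most 16; the shortest word of rank at most 2 has length 17. -/
/-- The Kari automaton (0-indexed states).  `false` = a = (1 2 3)(4 5 6),
`true` = b with 3↦6, 5↦3, 6↦3 and fixing 1,2,4. -/
def kari : Fin 6 → Bool → Fin 6 := fun q x =>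
  if x then ![0, 1, 5, 3, 2, 2] q else ![1, 2, 0, 4, 5, 3] q

/-!
The image `Q(wx)` depends only on `Qw` and the letter `x`, so the images of all words of length
at most `n` form a finite family computed by a breadth-first closure of `{Q}` under the letters.
For `n = 16` no member of it has at most two states, and a word of length 17 and rank 2 is
exhibited.
-/

section ImageClosure

variable {Q A : Type*} [Fintype Q] [DecidableEq Q] (δ : Q → A → Q)

def imageStep (s : Finset Q) (x : A) : Finset Q :=
  s.image (δ · x)

def reachableImages [Fintype A] : ℕ → Finset (Finset Q)
  | 0 => {Finset.univ}
  | n + 1 =>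
    reachableImages n ∪ (reachableImages n).biUnion fun s => Finset.univ.image (imageStep δ s)

theorem img_append_singleton (w : List A) (x : A) :
    img δ (w ++ [x]) = imageStep δ (img δ w) x := by
  simp only [img, imageStep, actW, List.foldl_append, List.foldl_cons, List.foldl_nil,
    Finset.image_image]
  rfl

theorem reachableImages_subset_of_le [Fintype A] {m n : ℕ} (h : m ≤ n) :
    reachableImages δ m ⊆ reachableImages δ n :=
  monotone_nat_of_le_succ (fun _ => Finset.subset_union_left) h

theorem img_mem_reachableImages_length [Fintype A] (w : List A) :
    img δ w ∈ reachableImages δ w.length := by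
  induction w using List.reverseRecOn with
  | nil => simp [img, actW, reachableImages]
  | append_singleton w x ih =>
    rw [img_append_singleton, List.length_append, List.length_singleton, reachableImages]
    exact Finset.mem_union_right _
      (Finset.mem_biUnion.2 ⟨_, ih, Finset.mem_image_of_mem _ (Finset.mem_univ x)⟩)

theorem lt_length_of_card_img_le [Fintype A] {n k : ℕ}
    (hreach : ∀ s ∈ reachableImages δ n, k < s.card) {w : List A} (hw : (img δ w).card ≤ k) :
    n < w.length := by
  by_contra! hshort
  have hcard :=
    hreach _ (reachableImages_subset_of_le δ hshort (img_mem_reachableImages_length δ w))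
  omega

end ImageClosure

set_option maxRecDepth 100000 in
set_option maxHeartbeats 4000000 in
theorem two_lt_card_of_mem_reachableImages_kari_sixteen :
    ∀ s ∈ reachableImages kari 16, 2 < s.card := by
  decide

def kariRankTwoWord : List Bool :=
  [true, false, false, true, false, true, false, false, true, false, false,
   true, false, true, false, false, true]

theorem card_img_kariRankTwoWord : (img kari kariRankTwoWord).card = 2 := by
  decide

/-- Kari's counterexample: there is a word of rank 2 = 6-4, no word of rank ≤ 2
has length ≤ 16, and the shortest word of rank ≤ 2 has length 17. -/
theorem kari_rank_two :
    (∃ w : List Bool, (img kari w).card = 2) ∧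
    (∀ w : List Bool, (img kari w).card ≤ 2 → 17 ≤ w.length) ∧
    (∃ w : List Bool, (img kari w).card ≤ 2 ∧ w.length = 17) := by
  exact ⟨⟨kariRankTwoWord, card_img_kariRankTwoWord⟩,
    fun _ => lt_length_of_card_img_le kari two_lt_card_of_mem_reachableImages_kari_sixteen,
    ⟨kariRankTwoWord, card_img_kariRankTwoWord.le, rfl⟩⟩
end

section
/- In the Černý automaton C_n, for any nonempty subset S of states, there is a word w with |Sw| = 1 of length at most (n−1)² − ⌈(n−|S|)/|S|⌉ · (2n − |S|·⌈n/|S|⌉ − 1), and for each size 1 ≤ k ≤ n there is a subset S of size k for which this bound is tight. -/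
def cerny (n : ℕ) [NeZero n] : ZMod n → Bool → ZMod n := fun i x =>
  if x then (if i = 0 then 1 else i) else i + 1

/-- Cardoso's bound for synchronizing a subset of size k in an n-state automaton. -/
def cardosoBound (n k : ℕ) : ℤ :=
  ((n : ℤ) - 1) ^ 2 -
    ⌈(((n : ℚ) - (k : ℚ)) / (k : ℚ))⌉ *
      (2 * (n : ℤ) - (k : ℤ) * ⌈((n : ℚ) / (k : ℚ))⌉ - 1)

/-!
Order the states cyclically as `1, 2, …, n - 1, 0` and let `pos x` be the place of `x` in
this order. A set `S` is measured by its cheapest covering arc `{l, l + 1, …, l + e}`, where the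
arc costs `n * e - pos l`. The word `a^(-l) b (a^(n-1) b)^(e-1)` collapses the arc to the state
`1` in exactly that many letters. Conversely, pulling a covering arc of `S x` back along a
letter `x` raises its cost by at most one, and singletons are covered at cost `≤ 0`; so every
word synchronizing `S` is at least as long as the cheapest arc covering `S`.

Write `n = k q + s + 1` with `s < k`; then Cardoso's bound is `n² - (n + s)(q + 1)`. The `k`
cyclic gaps of a `k`-set add up to `n`, and the arc starting right after a suitable gap (a gap
`≥ q + 2`, or else the last gap equal to `q + 1`) meets the bound. For the set whose gaps are
`q + 1` (`s + 1` times, at the start) followed by `q`, every covering arc can be shrunk to start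
at one of its points, and then it must still contain the preceding point: no arc does better.
-/

namespace Cerny

section CyclicGaps

/-- The gap in front of `a i` when `a 0 ≤ … ≤ a (k - 1)` are points on a circle of length `n`. -/
def cyclicGap (n : ℤ) (k : ℕ) (a : ℕ → ℤ) (i : ℕ) : ℤ :=
  if i = 0 then n + a 0 - a (k - 1) else a i - a (i - 1)

lemma le_add_mul_of_sub_le {a : ℕ → ℤ} {B : ℤ} {p r : ℕ} (hpr : p ≤ r)
    (h : ∀ j, p < j → j ≤ r → a j - a (j - 1) ≤ B) : a r ≤ a p + (r - p : ℕ) * B := by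
  induction r, hpr using Nat.le_induction with
  | base => simp
  | succ r hpr ih =>
    have hstep := h (r + 1) (by omega) le_rfl
    have := ih fun j hj hjr => h j hj (by omega)
    push_cast [Nat.sub_add_comm hpr]
    simp only [Nat.add_sub_cancel] at hstep
    linarith

lemma cyclicGap_zero (n : ℤ) (k : ℕ) (a : ℕ → ℤ) : cyclicGap n k a 0 = n + a 0 - a (k - 1) :=
  if_pos rfl

lemma cyclicGap_of_pos (n : ℤ) (k : ℕ) (a : ℕ → ℤ) {j : ℕ} (hj : 0 < j) :
    cyclicGap n k a j = a j - a (j - 1) :=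
  if_neg hj.ne'

lemma exists_succ_le_cyclicGap (a : ℕ → ℤ) {n k q s : ℕ} (hn : n = k * q + s + 1) (hs : s < k) :
    ∃ m ≤ k - 1, (q : ℤ) + 1 ≤ cyclicGap n k a m := by
  by_contra! hsmall
  have htele := le_add_mul_of_sub_le (a := a) (B := q) (Nat.zero_le (k - 1))
    fun j hj hjk => (cyclicGap_of_pos n k a hj).symm.trans_le (by linarith [hsmall j hjk])
  have hwrap := hsmall 0 (Nat.zero_le _)
  rw [cyclicGap_zero] at hwrap
  rw [Nat.sub_zero, Nat.cast_sub (by omega)] at htele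
  have hnZ : (n : ℤ) = k * q + s + 1 := by exact_mod_cast hn
  push_cast at htele
  nlinarith

lemma exists_cyclicGap_mul_add_ge (a : ℕ → ℤ) {n k q s : ℕ} (hn : n = k * q + s + 1)
    (hs : s < k) (ha : ∀ i < k, 0 ≤ a i) :
    ∃ i < k, ((n : ℤ) + s) * (q + 1) ≤ n * cyclicGap n k a i + a i := by
  by_contra! hlt
  have hnZ : (n : ℤ) = k * q + s + 1 := by exact_mod_cast hn
  have hsq : (s : ℤ) * q ≤ k * q := by exact_mod_cast Nat.mul_le_mul_right q hs.le
  have hG_le : ∀ i < k, cyclicGap n k a i ≤ q + 1 := by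
    intro i hi
    by_contra! hbig
    have : (n : ℤ) * (q + 2) ≤ n * cyclicGap n k a i :=
      mul_le_mul_of_nonneg_left (by linarith) (by positivity)
    nlinarith [hlt i hi, ha i hi]
  -- all gaps are now at most `q + 1`; look at the last one that equals `q + 1`
  let P := fun m => (q : ℤ) + 1 ≤ cyclicGap n k a m
  obtain ⟨m₀, hm₀k, hm₀⟩ := exists_succ_le_cyclicGap a hn hs
  set m := Nat.findGreatest P (k - 1)
  have hmk : m ≤ k - 1 := Nat.findGreatest_le _
  have hGm : (q : ℤ) + 1 ≤ cyclicGap n k a m := Nat.findGreatest_spec (P := P) hm₀k hm₀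
  have htail : a (k - 1) ≤ a m + (k - 1 - m : ℕ) * q :=
    le_add_mul_of_sub_le hmk fun j hj hjk => by
      rw [← cyclicGap_of_pos n k a (by omega)]
      linarith [not_le.mp (Nat.findGreatest_is_greatest (P := P) hj hjk)]
  have hhead : a m ≤ a 0 + (m - 0 : ℕ) * (q + 1) :=
    le_add_mul_of_sub_le (Nat.zero_le m) fun j hj hjm =>
      (cyclicGap_of_pos n k a hj).symm.trans_le (hG_le j (by omega))
  have hwrap := hG_le 0 (by omega)
  rw [cyclicGap_zero] at hwrap
  rw [Nat.sub_zero] at hhead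
  have hkm : ((k - 1 - m : ℕ) : ℤ) = k - 1 - m := by omega
  push_cast [hkm] at htail hhead
  have hsm : (s : ℤ) ≤ m := by nlinarith
  have hsqm : (s : ℤ) * q ≤ m * q := mul_le_mul_of_nonneg_right hsm (by positivity)
  have : (n : ℤ) * (q + 1) ≤ n * cyclicGap n k a m :=
    mul_le_mul_of_nonneg_left hGm (by positivity)
  nlinarith [hlt m (by omega), ha 0 (by omega)]

lemma sub_le_sub_cyclicGap {n k : ℕ} {a : ℕ → ℤ} (hmono : ∀ i j, i ≤ j → j < k → a i ≤ a j)
    (ha : ∀ i < k, 0 ≤ a i ∧ a i < n) {i j : ℕ} (hi : i < k) (hj : j < k) :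
    (if a i ≤ a j then a j - a i else n + a j - a i) ≤ n - cyclicGap n k a i := by
  unfold cyclicGap
  split_ifs with hij hi0 hi0
  · subst hi0
    linarith [hmono j (k - 1) (by omega) (by omega)]
  · linarith [ha j hj, ha (i - 1) (by omega)]
  · subst hi0
    linarith [hmono 0 j (by omega) hj]
  · linarith [hmono j (i - 1) (by by_contra h; linarith [hmono i j (by omega) hj]) (by omega)]

end CyclicGaps

section Bound

lemma exists_eq_mul_add_add_one {n k : ℕ} (hn : 0 < n) (hk : 0 < k) :
    ∃ q s, n = k * q + s + 1 ∧ s < k :=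
  ⟨(n - 1) / k, (n - 1) % k, by have := Nat.div_add_mod (n - 1) k; omega, Nat.mod_lt _ hk⟩

variable {n k q s : ℕ}

lemma cardosoBound_eq (hn : n = k * q + s + 1) (hs : s < k) :
    cardosoBound n k = (n : ℤ) ^ 2 - (n + s) * (q + 1) := by
  have hk : (0 : ℚ) < k := by exact_mod_cast (show 0 < k by omega)
  have hnQ : (n : ℚ) = k * q + s + 1 := by exact_mod_cast hn
  have hsQ : (s : ℚ) + 1 ≤ k := by exact_mod_cast hs
  have hceil : ⌈(n : ℚ) / k⌉ = q + 1 := by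
    rw [Int.ceil_eq_iff]
    push_cast
    constructor
    · rw [lt_div_iff₀ hk]
      nlinarith
    · rw [div_le_iff₀ hk]
      nlinarith
  have hceil' : ⌈((n : ℚ) - k) / k⌉ = q := by
    rw [sub_div, div_self hk.ne', Int.ceil_sub_one, hceil, add_sub_cancel_right]
  rw [cardosoBound, hceil, hceil']
  push_cast [hn]
  ring

lemma add_mul_succ_le_sq (hn : n = k * q + s + 1) (hs : s < k) :
    ((n : ℤ) + s) * (q + 1) ≤ n ^ 2 := by
  have hs' : (s : ℤ) < k := by exact_mod_cast hs
  have hnZ : (n : ℤ) = k * q + s + 1 := by exact_mod_cast hn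
  have hk : (0 : ℤ) ≤ k - 1 := by linarith
  have h1 : (0 : ℤ) ≤ k * q * q * (k - 1) := by positivity
  have h2 : (0 : ℤ) ≤ q * (2 * s + 1) * (k - 1) := by positivity
  rw [hnZ]
  nlinarith [sq_nonneg (s : ℤ)]

end Bound

section ZModFacts

variable {n : ℕ} [NeZero n]

lemma val_sub_one_of_ne_zero {y : ZMod n} (hy : y ≠ 0) : (y - 1).val = y.val - 1 := by
  have hn : n ≠ 1 := by
    rintro rfl
    exact hy (Subsingleton.elim _ _)
  have h1 : (1 : ZMod n).val = 1 := ZMod.val_one'' hn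
  rw [ZMod.val_sub (h1 ▸ ZMod.val_pos.mpr hy), h1]

lemma val_sub_of_lt {a b : ZMod n} (h : a.val < b.val) : (a - b).val = n + a.val - b.val := by
  have hne : b - a ≠ 0 := sub_ne_zero.mpr (by rintro rfl; omega)
  rw [← neg_sub, ZMod.neg_val, if_neg hne, ZMod.val_sub h.le]
  have := ZMod.val_lt b
  omega

lemma val_neg_natCast {d : ℕ} (hd : 0 < d) (hdn : d ≤ n) : (-(d : ZMod n)).val = n - d := by
  rcases hdn.lt_or_eq with hlt | rfl
  · rw [ZMod.neg_val, if_neg, ZMod.val_natCast_of_lt hlt]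
    rw [← ZMod.val_eq_zero, ZMod.val_natCast_of_lt hlt]
    omega
  · simp

end ZModFacts

variable {n : ℕ}

def pos (x : ZMod n) : ℕ := (x - 1).val

def arc (l : ZMod n) (e : ℕ) : Set (ZMod n) := {x | (x - l).val ≤ e}

def arcCost (l : ZMod n) (e : ℕ) : ℤ := n * e - pos l

@[simp] lemma pos_one : pos (1 : ZMod n) = 0 := by simp [pos]

lemma pos_eq_zero {x : ZMod n} : pos x = 0 ↔ x = 1 := by
  rw [pos, ZMod.val_eq_zero, sub_eq_zero]

lemma pos_natCast_add_one {t : ℕ} (ht : t < n) : pos ((t : ZMod n) + 1) = t := by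
  simp [pos, ZMod.val_natCast_of_lt ht]

lemma mem_arc_zero {l x : ZMod n} : x ∈ arc l 0 ↔ x = l := by
  simp [arc, ZMod.val_eq_zero, sub_eq_zero]

lemma actW_append {Q A : Type*} (δ : Q → A → Q) (q : Q) (u v : List A) :
    actW δ q (u ++ v) = actW δ (actW δ q u) v :=
  List.foldl_append

lemma subset_arc_sub_one {S : Finset (ZMod n)} {l : ZMod n} {e : ℕ}
    (h : ↑(S.image (· + 1)) ⊆ arc l e) : ↑S ⊆ arc (l - 1) e := by
  intro x hx
  have := h (Finset.mem_coe.mpr (Finset.mem_image_of_mem _ hx))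
  simpa [arc, show x - (l - 1) = x + 1 - l by ring] using this

def blockWord (n : ℕ) : List Bool := List.replicate (n - 1) false ++ [true]

def arcWord (l : ZMod n) (e : ℕ) : List Bool :=
  List.replicate (-l).val false ++ true :: (List.replicate e (blockWord n)).flatten

section Automaton

variable [NeZero n]

lemma pos_lt (x : ZMod n) : pos x < n := ZMod.val_lt _

lemma pos_injective : Function.Injective (pos : ZMod n → ℕ) :=
  fun _ _ h => sub_left_injective (ZMod.val_injective n h)

lemma pos_zero : pos (0 : ZMod n) = n - 1 := by
  obtain ⟨m, rfl⟩ := Nat.exists_eq_succ_of_ne_zero (NeZero.ne n)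
  simp [pos, ZMod.val_neg_one]

lemma val_le_pos_add_one (x : ZMod n) : x.val ≤ pos x + 1 := by
  by_cases hx : x = 0
  · simp [hx]
  · rw [pos, val_sub_one_of_ne_zero hx]
    omega

lemma val_neg_add_pos (l : ZMod n) : (-l).val + pos l = n - 1 := by
  obtain ⟨m, rfl⟩ := Nat.exists_eq_succ_of_ne_zero (NeZero.ne n)
  have h1 : (-1 : ZMod (m + 1)).val = m := ZMod.val_neg_one m
  have hle : (l - 1).val ≤ (-1 : ZMod (m + 1)).val := by
    rw [h1]
    exact Nat.lt_succ_iff.mp (ZMod.val_lt _)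
  rw [show -l = -1 - (l - 1) by ring, ZMod.val_sub hle, h1, pos]
  omega

lemma val_sub_eq (x l : ZMod n) :
    ((x - l).val : ℤ) = if (pos l : ℤ) ≤ pos x then (pos x : ℤ) - pos l else n + pos x - pos l := by
  have h : x - l = (x - 1) - (l - 1) := by ring
  have hx : (x - 1).val = pos x := rfl
  have hl : (l - 1).val = pos l := rfl
  split_ifs with hle <;> norm_cast at hle
  · rw [h, ZMod.val_sub hle, hx, hl]
    omega
  · rw [h, val_sub_of_lt (not_le.mp hle), hx, hl]
    have := pos_lt l
    omega

lemma pos_cerny_true (y : ZMod n) : pos (cerny n y true) = y.val - 1 := by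
  by_cases hy : y = 0
  · simp [cerny, hy]
  · simp [cerny, hy, pos, val_sub_one_of_ne_zero hy]

section Words

lemma actW_replicate_false (x : ZMod n) (j : ℕ) :
    actW (cerny n) x (List.replicate j false) = x + j := by
  induction j generalizing x with
  | zero => simp [actW]
  | succ j ih =>
    rw [List.replicate_succ, ← List.singleton_append, actW_append, ih]
    simp only [actW, cerny, List.foldl]
    push_cast
    ring

lemma pos_actW_blockWord (x : ZMod n) : pos (actW (cerny n) x (blockWord n)) = pos x - 1 := by
  have hcast : ((n - 1 : ℕ) : ZMod n) = -1 := by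
    rw [Nat.cast_pred (NeZero.pos n), ZMod.natCast_self, zero_sub]
  rw [blockWord, actW_append, actW_replicate_false, hcast, ← sub_eq_add_neg]
  exact pos_cerny_true (x - 1)

lemma pos_actW_blockWord_pow (x : ZMod n) (e : ℕ) :
    pos (actW (cerny n) x (List.replicate e (blockWord n)).flatten) = pos x - e := by
  induction e generalizing x with
  | zero => simp [actW]
  | succ e ih =>
    rw [List.replicate_succ, List.flatten_cons, actW_append, ih, pos_actW_blockWord]
    omega

lemma length_blockWord : (blockWord n).length = n := by
  have := NeZero.pos n
  simp [blockWord]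
  omega

lemma actW_arcWord {l x : ZMod n} {e : ℕ} (hx : x ∈ arc l (e + 1)) :
    actW (cerny n) x (arcWord l e) = 1 := by
  rw [← pos_eq_zero, arcWord, actW_append, ← List.singleton_append, actW_append,
    pos_actW_blockWord_pow, actW_replicate_false, ZMod.natCast_zmod_val, ← sub_eq_add_neg]
  have hb : pos (actW (cerny n) (x - l) [true]) = (x - l).val - 1 := pos_cerny_true (x - l)
  have hx : (x - l).val ≤ e + 1 := hx
  rw [hb]
  omega

lemma length_arcWord (l : ZMod n) (e : ℕ) :
    ((arcWord l e).length : ℤ) = arcCost l (e + 1) := by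
  have h : ((-l).val : ℤ) + pos l = n - 1 := by
    have := val_neg_add_pos l
    have := pos_lt l
    omega
  simp only [arcWord, arcCost, List.length_append, List.length_replicate, List.length_cons,
    List.length_flatten, List.map_replicate, List.sum_replicate, length_blockWord, smul_eq_mul]
  push_cast
  linarith

lemma exists_word_collapsing_arc (l : ZMod n) (e : ℕ) :
    ∃ (w : List Bool) (q : ZMod n), (∀ x ∈ arc l e, actW (cerny n) x w = q) ∧
      (w.length : ℤ) ≤ max (arcCost l e) 0 := by
  cases e with
  | zero => exact ⟨[], l, fun x hx => mem_arc_zero.mp hx, by simp⟩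
  | succ e =>
    exact ⟨arcWord l e, 1, fun x hx => actW_arcWord hx,
      (length_arcWord l e).le.trans (le_max_left _ _)⟩

end Words

section LowerBound

lemma arcCost_sub_one_le (l : ZMod n) (e : ℕ) : arcCost (l - 1) e ≤ arcCost l e + 1 := by
  have := val_le_pos_add_one (l - 1)
  have hl : (l - 1).val = pos l := rfl
  simp only [arcCost]
  omega

lemma exists_arc_of_image_true {S : Finset (ZMod n)} {l : ZMod n} {e : ℕ}
    (h : ↑(S.image (cerny n · true)) ⊆ arc l e) :
    ∃ (l' : ZMod n) (e' : ℕ), ↑S ⊆ arc l' e' ∧ arcCost l' e' ≤ arcCost l e + 1 := by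
  by_cases hS : ↑S ⊆ arc l e
  · exact ⟨l, e, hS, by linarith⟩
  obtain ⟨s, hs, hsl⟩ := Set.not_subset.mp hS
  have himg : ∀ x ∈ S, cerny n x true ∈ arc l e :=
    fun x hx => h (Finset.mem_coe.mpr (Finset.mem_image_of_mem _ hx))
  -- `b` moves only `0`, so `0` is the point that left the arc and `1 = b 0` is its first point
  have hs0 : s = 0 := by
    by_contra hne
    exact hsl (by simpa [cerny, hne] using himg s hs)
  subst hs0
  have h1 : (1 : ZMod n) ∈ arc l e := by simpa [cerny] using himg 0 hs
  have hl : l = 1 := by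
    by_contra hne
    apply hsl
    change (0 - l).val ≤ e
    rw [show (0 : ZMod n) - l = (1 - l) - 1 by ring,
      val_sub_one_of_ne_zero (sub_ne_zero.mpr (Ne.symm hne))]
    exact (Nat.sub_le _ _).trans h1
  subst hl
  refine ⟨0, e + 1, fun x hx => ?_, ?_⟩
  · by_cases hx0 : x = 0
    · simp [arc, hx0]
    · have hx1 : pos x ≤ e := by simpa [cerny, hx0, arc, pos] using himg x hx
      change (x - 0).val ≤ e + 1
      rw [sub_zero]
      have := val_le_pos_add_one x
      omega
  · simp only [arcCost, pos_zero, pos_one]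
    push_cast [Nat.cast_sub (NeZero.pos n)]
    exact le_of_eq (by ring)

lemma exists_arc_of_image_letter (c : Bool) {S : Finset (ZMod n)} {l : ZMod n} {e : ℕ}
    (h : ↑(S.image (cerny n · c)) ⊆ arc l e) :
    ∃ (l' : ZMod n) (e' : ℕ), ↑S ⊆ arc l' e' ∧ arcCost l' e' ≤ arcCost l e + 1 := by
  cases c with
  | false =>
    exact ⟨l - 1, e, subset_arc_sub_one (by simpa [cerny] using h), arcCost_sub_one_le l e⟩
  | true => exact exists_arc_of_image_true h

lemma exists_arc_cost_le_length (w : List Bool) {S : Finset (ZMod n)}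
    (hw : (S.image fun q => actW (cerny n) q w).card = 1) :
    ∃ (l : ZMod n) (e : ℕ), ↑S ⊆ arc l e ∧ arcCost l e ≤ w.length := by
  induction w generalizing S with
  | nil =>
    obtain ⟨q, hq⟩ := Finset.card_eq_one.mp hw
    have hS : S = {q} := by simpa [actW] using hq
    exact ⟨q, 0, by simp [hS, arc], by simp [arcCost]⟩
  | cons c w ih =>
    have himg : (S.image fun q => actW (cerny n) q (c :: w)) =
        (S.image (cerny n · c)).image fun q => actW (cerny n) q w := by
      rw [Finset.image_image]
      rfl
    obtain ⟨l, e, hsub, hcost⟩ := ih (himg ▸ hw)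
    obtain ⟨l', e', hsub', hcost'⟩ := exists_arc_of_image_letter c hsub
    exact ⟨l', e', hsub', by push_cast [List.length_cons]; linarith⟩

lemma exists_mem_arc_cost_le {S : Finset (ZMod n)} (hS : S.Nonempty) {l : ZMod n} {e : ℕ}
    (h : ↑S ⊆ arc l e) : ∃ x ∈ S, ∃ e' : ℕ, ↑S ⊆ arc x e' ∧ arcCost x e' ≤ arcCost l e := by
  obtain ⟨x, hx, hmin⟩ := S.exists_min_image (fun z => (z - l).val) hS
  have hxe : (x - l).val ≤ e := h hx
  refine ⟨x, hx, e - (x - l).val, fun z hz => ?_, ?_⟩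
  · change (z - x).val ≤ e - (x - l).val
    rw [show z - x = (z - l) - (x - l) by ring, ZMod.val_sub (hmin z hz)]
    exact Nat.sub_le_sub_right (h hz) _
  · by_cases hxl : x = l
    · subst hxl
      simp
    · have ht : 1 ≤ (x - l).val := ZMod.val_pos.mpr (sub_ne_zero.mpr hxl)
      have := pos_lt l
      have : (n : ℤ) * 1 ≤ n * (x - l).val := by
        gcongr
        exact_mod_cast ht
      simp only [arcCost]
      push_cast [hxe]
      nlinarith

lemma le_of_sub_mem_arc {x : ZMod n} {d e : ℕ} (hd : 0 < d) (hdn : d ≤ n)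
    (h : x - d ∈ arc x e) : n - d ≤ e := by
  have : (x - d - x).val ≤ e := h
  rwa [sub_sub_cancel_left, val_neg_natCast hd hdn] at this

end LowerBound

lemma exists_arc_cost_le_of_card {k q s : ℕ} (S : Finset (ZMod n)) (hS : S.card = k)
    (hn : n = k * q + s + 1) (hs : s < k) :
    ∃ (l : ZMod n) (e : ℕ), ↑S ⊆ arc l e ∧ arcCost l e ≤ (n : ℤ) ^ 2 - (n + s) * (q + 1) := by
  have hP : (S.image pos).card = k := by rw [Finset.card_image_of_injective _ pos_injective, hS]
  set f := (S.image pos).orderEmbOfFin hP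
  have hfS : ∀ j, ∃ x ∈ S, pos x = f j :=
    fun j => Finset.mem_image.mp (Finset.orderEmbOfFin_mem _ hP j)
  set a : ℕ → ℤ := fun i => if h : i < k then (f ⟨i, h⟩ : ℤ) else 0
  have ha : ∀ j : Fin k, a j = f j := fun j => dif_pos j.2
  have hmono : ∀ i j, i ≤ j → j < k → a i ≤ a j := fun i j hij hj => by
    rw [ha ⟨i, by omega⟩, ha ⟨j, hj⟩]
    exact_mod_cast f.monotone (Fin.mk_le_mk.mpr hij)
  have hbound : ∀ i < k, 0 ≤ a i ∧ a i < n := fun i hi => by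
    obtain ⟨x, -, hx⟩ := hfS ⟨i, hi⟩
    rw [ha ⟨i, hi⟩, ← hx]
    exact ⟨by positivity, by exact_mod_cast pos_lt x⟩
  obtain ⟨i, hi, hgap⟩ := exists_cyclicGap_mul_add_ge a hn hs fun i hi => (hbound i hi).1
  obtain ⟨x, hxS, hx⟩ := hfS ⟨i, hi⟩
  have hdist : ∀ z ∈ S, ((z - x).val : ℤ) ≤ n - cyclicGap n k a i := by
    intro z hz
    obtain ⟨j, hj⟩ : ∃ j, f j = pos z := by
      rw [← Set.mem_range, Finset.range_orderEmbOfFin]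
      exact Finset.mem_image_of_mem pos hz
    rw [val_sub_eq, hx, ← hj, ← ha, ← ha]
    exact sub_le_sub_cyclicGap hmono hbound hi j.2
  have hG : 0 ≤ (n : ℤ) - cyclicGap n k a i := (Int.natCast_nonneg _).trans (hdist x hxS)
  refine ⟨x, (n - cyclicGap n k a i).toNat, fun z hz => ?_, ?_⟩
  · have := hdist z hz
    change (z - x).val ≤ _
    omega
  · simp only [arcCost, Int.toNat_of_nonneg hG, hx, ← ha]
    nlinarith

lemma exists_sync_word_length_le (S : Finset (ZMod n)) (hS : S.Nonempty) :
    ∃ w : List Bool, (S.image fun x => actW (cerny n) x w).card = 1 ∧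
      (w.length : ℤ) ≤ cardosoBound n S.card := by
  obtain ⟨q, s, hn, hs⟩ := exists_eq_mul_add_add_one (NeZero.pos n) (Finset.card_pos.mpr hS)
  obtain ⟨l, e, hsub, hcost⟩ := exists_arc_cost_le_of_card S rfl hn hs
  obtain ⟨w, y, hw, hlen⟩ := exists_word_collapsing_arc l e
  refine ⟨w, ?_, ?_⟩
  · rw [Finset.image_congr fun x hx => hw x (hsub hx), Finset.image_const hS,
      Finset.card_singleton]
  · rw [cardosoBound_eq hn hs]
    exact hlen.trans (max_le hcost (sub_nonneg.mpr (add_mul_succ_le_sq hn hs)))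

end Automaton

section Extremal

def extremalPos (q s i : ℕ) : ℕ := i * q + min i s

def extremalSet (n k q s : ℕ) : Finset (ZMod n) :=
  (Finset.range k).image fun i => (extremalPos q s i : ZMod n) + 1

variable {k q s : ℕ}

lemma extremalPos_succ (q s i : ℕ) :
    extremalPos q s (i + 1) = extremalPos q s i + q + if i < s then 1 else 0 := by
  unfold extremalPos
  split_ifs <;> rw [Nat.succ_mul] <;> omega

lemma extremalPos_lt (hn : n = k * q + s + 1) {i : ℕ} (hi : i < k) : extremalPos q s i < n := by
  have : (i + 1) * q ≤ k * q := Nat.mul_le_mul_right q hi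
  rw [Nat.succ_mul] at this
  unfold extremalPos
  omega

lemma extremalPos_lt_extremalPos (hn : n = k * q + s + 1) (hkn : k ≤ n) {i j : ℕ} (hij : i < j)
    (hj : j < k) : extremalPos q s i < extremalPos q s j := by
  unfold extremalPos
  rcases Nat.eq_zero_or_pos q with rfl | hq
  · simp only [mul_zero, zero_add]
    omega
  · have := Nat.mul_lt_mul_of_pos_right hij hq
    omega

lemma card_extremalSet (hn : n = k * q + s + 1) (hkn : k ≤ n) :
    (extremalSet n k q s).card = k := by
  rw [extremalSet, Finset.card_image_of_injOn, Finset.card_range]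
  intro i hi j hj hij
  simp only [Finset.coe_range, Set.mem_Iio, add_left_inj] at hi hj hij
  have := congrArg ZMod.val hij
  rw [ZMod.val_natCast_of_lt (extremalPos_lt hn hi),
    ZMod.val_natCast_of_lt (extremalPos_lt hn hj)] at this
  rcases lt_trichotomy i j with h | h | h
  · exact absurd this (extremalPos_lt_extremalPos hn hkn h hj).ne
  · exact h
  · exact absurd this (extremalPos_lt_extremalPos hn hkn h hi).ne'

lemma natCast_add_one_sub_eq {a b d : ℕ} (h : ((b + d : ℕ) : ZMod n) = a) :
    (a : ZMod n) + 1 - d = b + 1 := by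
  push_cast at h
  linear_combination -h

lemma exists_pred_mem_extremalSet (hn : n = k * q + s + 1) (hs : s < k) (hkn : k ≤ n)
    {x : ZMod n} (hx : x ∈ extremalSet n k q s) :
    ∃ d, 0 < d ∧ d ≤ n ∧ x - d ∈ extremalSet n k q s ∧ n * d + pos x ≤ (n + s) * (q + 1) := by
  obtain ⟨i, hi, rfl⟩ := Finset.mem_image.mp hx
  rw [Finset.mem_range] at hi
  rw [pos_natCast_add_one (extremalPos_lt hn hi)]
  have hmem : ∀ j < k, (extremalPos q s j : ZMod n) + 1 ∈ extremalSet n k q s :=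
    fun j hj => Finset.mem_image_of_mem _ (Finset.mem_range.mpr hj)
  have hqn : q + 1 ≤ n := by nlinarith
  cases i with
  | zero =>
    refine ⟨q + 1, by omega, hqn, ?_, by simp [extremalPos]⟩
    rw [natCast_add_one_sub_eq (b := extremalPos q s (k - 1))]
    · exact hmem _ (by omega)
    · have : (k - 1) * q + q = k * q := by
        rw [Nat.sub_one_mul]
        have := Nat.le_mul_of_pos_left q hi
        omega
      have : extremalPos q s (k - 1) + (q + 1) = n := by
        simp only [extremalPos]
        omega
      rw [this, ZMod.natCast_self]
      simp [extremalPos]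
  | succ i =>
    have hstep := extremalPos_succ q s i
    have hpos := extremalPos_lt hn hi
    split_ifs at hstep with his
    · refine ⟨q + 1, by omega, hqn, ?_, ?_⟩
      · rw [natCast_add_one_sub_eq (b := extremalPos q s i) (by rw [hstep]; ring_nf)]
        exact hmem i (by omega)
      · have : extremalPos q s (i + 1) ≤ s * (q + 1) := by
          have := Nat.mul_le_mul_right q (show i + 1 ≤ s by omega)
          simp only [extremalPos, Nat.min_eq_left (show i + 1 ≤ s by omega)]
          nlinarith
        nlinarith
    · have hq : 0 < q := by
        rcases Nat.eq_zero_or_pos q with rfl | hq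
        · omega
        · exact hq
      refine ⟨q, hq, by omega, ?_, by nlinarith⟩
      rw [natCast_add_one_sub_eq (b := extremalPos q s i) (by rw [hstep]; ring_nf)]
      exact hmem i (by omega)

variable [NeZero n]

lemma le_length_of_sync_extremalSet (hn : n = k * q + s + 1) (hs : s < k) (hkn : k ≤ n)
    (w : List Bool) (hw : ((extremalSet n k q s).image fun x => actW (cerny n) x w).card = 1) :
    (n : ℤ) ^ 2 - (n + s) * (q + 1) ≤ w.length := by
  obtain ⟨l, e, hsub, hcost⟩ := exists_arc_cost_le_length w hw
  have hne : (extremalSet n k q s).Nonempty := by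
    rw [← Finset.card_pos, card_extremalSet hn hkn]
    omega
  obtain ⟨x, hx, e', hsub', hcost'⟩ := exists_mem_arc_cost_le hne hsub
  obtain ⟨d, hd, hdn, hmem, hdx⟩ := exists_pred_mem_extremalSet hn hs hkn hx
  have he' : ((n - d : ℕ) : ℤ) ≤ e' := by exact_mod_cast le_of_sub_mem_arc hd hdn (hsub' hmem)
  have hdx : (n : ℤ) * d + pos x ≤ (n + s) * (q + 1) := by exact_mod_cast hdx
  rw [Nat.cast_sub hdn] at he'
  have : (n : ℤ) * (n - d) ≤ n * e' := mul_le_mul_of_nonneg_left he' (by positivity)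
  simp only [arcCost] at hcost hcost'
  linarith [(pos_lt l).le]

end Extremal

end Cerny

open Cerny in
theorem cerny_subset_synchronization_general (n : ℕ) [NeZero n] :
    (∀ S : Finset (ZMod n), S.Nonempty →
      ∃ w : List Bool, (S.image (fun q => actW (cerny n) q w)).card = 1 ∧
        (w.length : ℤ) ≤ cardosoBound n S.card) ∧
    (∀ k : ℕ, 1 ≤ k → k ≤ n → ∃ S : Finset (ZMod n), S.card = k ∧
      (∃ w : List Bool, (S.image (fun q => actW (cerny n) q w)).card = 1 ∧
        (w.length : ℤ) = cardosoBound n k) ∧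
      (∀ w : List Bool, (S.image (fun q => actW (cerny n) q w)).card = 1 →
        cardosoBound n k ≤ (w.length : ℤ))) := by
  refine ⟨exists_sync_word_length_le, fun k hk hkn => ?_⟩
  obtain ⟨q, s, hn, hs⟩ := exists_eq_mul_add_add_one (NeZero.pos n) hk
  have hcard := card_extremalSet hn hkn
  have hlower : ∀ w : List Bool,
      ((extremalSet n k q s).image fun x => actW (cerny n) x w).card = 1 →
        cardosoBound n k ≤ w.length := fun w hw => by
    rw [cardosoBound_eq hn hs]
    exact le_length_of_sync_extremalSet hn hs hkn w hw
  refine ⟨extremalSet n k q s, hcard, ?_, hlower⟩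
  obtain ⟨w, hw, hlen⟩ := exists_sync_word_length_le _ (Finset.card_pos.mp (hcard ▸ hk))
  exact ⟨w, hw, le_antisymm (hcard ▸ hlen) (hlower w hw)⟩

/-- In the Černý automaton, every nonempty subset S can be synchronized by a
word of length at most Cardoso's bound, and for each size the bound is tight. -/
theorem cerny_subset_synchronization (n : ℕ) [NeZero n] (hn : 2 ≤ n) :
    (∀ S : Finset (ZMod n), S.Nonempty →
      ∃ w : List Bool, (S.image (fun q => actW (cerny n) q w)).card = 1 ∧
        (w.length : ℤ) ≤ cardosoBound n S.card) ∧
    (∀ k : ℕ, 1 ≤ k → k ≤ n → ∃ S : Finset (ZMod n), S.card = k ∧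
      (∃ w : List Bool, (S.image (fun q => actW (cerny n) q w)).card = 1 ∧
        (w.length : ℤ) = cardosoBound n k) ∧
      (∀ w : List Bool, (S.image (fun q => actW (cerny n) q w)).card = 1 →
        cardosoBound n k ≤ (w.length : ℤ))) :=
  cerny_subset_synchronization_general n
end
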